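/- For all m ≥ n ≥ 2, every path forest with n paths and total order at most m² - (n-1)² is m-burnable, and m² - (n-1)² is the largest integer with this property (i.e., there is a path forest with n paths of order m² - (n-1)² + 1 that is not m-burnable). -/

import Mathlib

/-- A graph is `m`-burnable if its vertices can be covered by `m` balls of
radii `0, 1, ..., m-1`. -/
def IsBurnable {V : Type*} (G : SimpleGraph V) (m : ℕ) : Prop :=
  ∃ f : Fin m → V, ∀ v : V, ∃ i : Fin m, G.edist (f i) v ≤ (i.val : ℕ∞)

/-- The burning number of a graph: the least `k` such that the graph is `k`-burnable. -/
noncomputable def burningNumber {V : Type*} (G : SimpleGraph V) : ℕ :=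
  sInf {k : ℕ | IsBurnable G k}

/-- The path forest whose `i`-th path has `l i` vertices. -/
def pathForest {n : ℕ} (l : Fin n → ℕ) : SimpleGraph (Σ i : Fin n, Fin (l i)) where
  Adj x y := x.1 = y.1 ∧ Nat.dist x.2.val y.2.val = 1
  symm := by
    constructor
    rintro ⟨i, a⟩ ⟨j, b⟩ ⟨h1, h2⟩
    exact ⟨h1.symm, by rwa [Nat.dist_comm]⟩
  loopless := by
    constructor
    rintro ⟨i, a⟩ ⟨_, h⟩
    simp [Nat.dist_self] at h

/-- The spider with head `none` and arms of lengths `l 0, ..., l (n-1)`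
(arm lengths count vertices excluding the head). -/
def spider {n : ℕ} (l : Fin n → ℕ) : SimpleGraph (Option (Σ i : Fin n, Fin (l i))) where
  Adj x y :=
    match x, y with
    | none, none => False
    | none, some b => b.2.val = 0
    | some a, none => a.2.val = 0
    | some a, some b => a.1 = b.1 ∧ Nat.dist a.2.val b.2.val = 1
  symm := by
    constructor
    rintro (_ | ⟨i, a⟩) (_ | ⟨j, b⟩) h <;> simp_all [Nat.dist_comm]

  loopless := by
    constructor
    rintro (_ | ⟨i, a⟩) h <;> simp_all [Nat.dist_self]

/-!
Burning a path forest with `m` balls amounts to deciding, for each radius `j < m`, which path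
receives the ball of radius `j`: such a ball covers at most `2j + 1` vertices of its path, and
the balls given to one path can be laid end to end along it. The upper bound then follows by a
greedy induction on `m`: the ball of radius `m - 1` goes to a longest path, which it either
covers completely (and the path is removed) or shortens by `2m - 1`; once every path is short,
the top balls are dealt out one per path.

For tightness, take `n - 1` paths of order `2` and one long path. Each short path needs a ball
of positive radius, so the short paths absorb at least `3 + 5 + ⋯ + (2n - 1) = n² - 1` of the
`m²` vertices the balls can cover, which leaves too few for the long path.
-/

open Finset

lemma sum_range_two_mul_add_one (m : ℕ) : ∑ j ∈ range m, (2 * j + 1) = m ^ 2 := by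
  induction m with
  | zero => simp
  | succ k ih => rw [sum_range_succ, ih]; ring

lemma sq_add_two_mul_card_le_sum {a : ℕ} (T : Finset ℕ) (hT : ∀ x ∈ T, a ≤ x) :
    #T ^ 2 + 2 * a * #T ≤ ∑ x ∈ T, (2 * x + 1) := by
  induction T using Finset.induction_on_max with
  | empty => simp
  | insert b s hlt ih =>
    have hb : b ∉ s := fun h => lt_irrefl b (hlt b h)
    have hcard : #s ≤ b - a := by
      simpa using card_le_card fun x hx => mem_Ico.2 ⟨hT x (mem_insert_of_mem hx), hlt x hx⟩
    have hab : a ≤ b := hT b (mem_insert_self b s)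
    have ih' := ih fun x hx => hT x (mem_insert_of_mem hx)
    have hstep : 2 * #s + 2 * a + 1 ≤ 2 * b + 1 := by omega
    rw [sum_insert hb, card_insert_of_notMem hb]
    nlinarith

lemma exists_sum_filter_lt_le_lt {α : Type*} [LinearOrder α] (w : α → ℕ) (A : Finset α)
    {x : ℕ} (hx : x < ∑ j ∈ A, w j) :
    ∃ j ∈ A, ∑ i ∈ A with i < j, w i ≤ x ∧ x < ∑ i ∈ A with i < j, w i + w j := by
  induction A using Finset.induction_on_max with
  | empty => simp at hx
  | insert b s hlt ih =>
    have hb : b ∉ s := fun h => lt_irrefl b (hlt b h)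
    rw [sum_insert hb] at hx
    by_cases hxs : x < ∑ j ∈ s, w j
    · obtain ⟨j, hj, hjx⟩ := ih hxs
      have hfilter : {i ∈ insert b s | i < j} = {i ∈ s | i < j} := by
        rw [filter_insert, if_neg (not_lt.2 (hlt j hj).le)]
      exact ⟨j, mem_insert_of_mem hj, by rwa [hfilter]⟩
    · have hfilter : {i ∈ insert b s | i < b} = s := by
        rw [filter_insert, if_neg (lt_irrefl b), filter_true_of_mem hlt]
      exact ⟨b, mem_insert_self b s, by rw [hfilter]; omega⟩

section Capacity

variable {ι : Type*} [DecidableEq ι] {m : ℕ}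

/-- `g j` is the path receiving the ball of radius `j`, which covers at most `2j + 1` of its
vertices. -/
def capacity (g : Fin m → ι) (i : ι) : ℕ :=
  ∑ j with g j = i, (2 * (j : ℕ) + 1)

lemma sum_capacity [Fintype ι] (g : Fin m → ι) : ∑ i, capacity g i = m ^ 2 := by
  simp only [capacity]
  rw [Finset.sum_fiberwise, Fin.sum_univ_eq_sum_range (fun j => 2 * j + 1),
    sum_range_two_mul_add_one]

lemma capacity_snoc (g : Fin m → ι) (i₀ i : ι) :
    capacity (Fin.snoc (α := fun _ => ι) g i₀) i =
      capacity g i + if i₀ = i then 2 * m + 1 else 0 := by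
  simp only [capacity, sum_filter, Fin.sum_univ_castSucc, Fin.snoc_castSucc, Fin.snoc_last,
    Fin.val_castSucc, Fin.val_last]

lemma exists_pos_of_two_le_capacity {g : Fin m → ι} {i : ι} (h : 2 ≤ capacity g i) :
    ∃ j, g j = i ∧ 0 < (j : ℕ) := by
  by_contra! hzero
  have hzero' : ∀ j ∈ ({j | g j = i} : Finset (Fin m)), (j : ℕ) = 0 := fun j hj =>
    Nat.le_zero.1 (hzero j (mem_filter.1 hj).2)
  have hcard : #({j | g j = i} : Finset (Fin m)) ≤ 1 :=
    card_le_one.2 fun a ha b hb => Fin.ext ((hzero' a ha).trans (hzero' b hb).symm)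
  rw [capacity, sum_congr rfl fun j hj => by rw [hzero' j hj], sum_const, smul_eq_mul] at h
  omega

end Capacity

lemma capacity_last_add_sq_le {k m : ℕ} (g : Fin m → Fin (k + 1))
    (h : ∀ i : Fin k, 2 ≤ capacity g i.castSucc) :
    capacity g (Fin.last k) + (k + 1) ^ 2 ≤ m ^ 2 + 1 := by
  choose J hJ using fun i => exists_pos_of_two_le_capacity (h i)
  have hJinj : Function.Injective fun i : Fin k => (J i : ℕ) := fun i i' hii' =>
    Fin.castSucc_injective _ (by rw [← (hJ i).1, ← (hJ i').1, Fin.ext hii'])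
  have hsmall : k ^ 2 + 2 * k ≤ ∑ i : Fin k, capacity g i.castSucc :=
    calc k ^ 2 + 2 * k ≤ ∑ x ∈ univ.image fun i => (J i : ℕ), (2 * x + 1) := by
          simpa [card_image_of_injective _ hJinj] using
            sq_add_two_mul_card_le_sum (a := 1) (univ.image fun i => (J i : ℕ)) fun x hx => by
              obtain ⟨i, -, rfl⟩ := mem_image.1 hx
              exact (hJ i).2
      _ = ∑ i, (2 * (J i : ℕ) + 1) := sum_image fun i _ i' _ => (hJinj ·)
      _ ≤ ∑ i, capacity g i.castSucc := sum_le_sum fun i _ =>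
          single_le_sum (f := fun j : Fin m => 2 * (j : ℕ) + 1) (fun _ _ => Nat.zero_le _)
            (mem_filter.2 ⟨mem_univ _, (hJ i).1⟩)
  have htotal := sum_capacity g
  rw [Fin.sum_univ_castSucc] at htotal
  nlinarith

lemma sub_one_sq_add_two_mul_le (c : ℕ) : (c - 1) ^ 2 + 2 * c ≤ c ^ 2 + 1 := by
  rcases c with _ | c
  · simp
  · rw [Nat.add_sub_cancel]; nlinarith

section Greedy

variable {ι : Type*} [DecidableEq ι] {m : ℕ} {s : Finset ι} {l : ι → ℕ}

lemma le_capacity_snoc_of_erase {g : Fin m → ι} {i₀ : ι}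
    (hg : ∀ i ∈ s.erase i₀, l i ≤ capacity g i) (h₀ : l i₀ ≤ 2 * m + 1) :
    ∀ i ∈ s, l i ≤ capacity (Fin.snoc (α := fun _ => ι) g i₀) i := by
  intro i hi
  rw [capacity_snoc]
  by_cases h : i₀ = i
  · subst h; rw [if_pos rfl]; omega
  · rw [if_neg h]; exact (hg i (mem_erase.2 ⟨Ne.symm h, hi⟩)).trans (Nat.le_add_right _ _)

lemma le_capacity_snoc_of_update {g : Fin m → ι} {i₀ : ι}
    (hg : ∀ i ∈ s, Function.update l i₀ (l i₀ - (2 * m + 1)) i ≤ capacity g i) :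
    ∀ i ∈ s, l i ≤ capacity (Fin.snoc (α := fun _ => ι) g i₀) i := by
  intro i hi
  have := hg i hi
  rw [capacity_snoc]
  by_cases h : i₀ = i
  · subst h; rw [Function.update_self] at this; rw [if_pos rfl]; omega
  · rw [Function.update_of_ne (Ne.symm h)] at this; rw [if_neg h]; omega

variable [Nonempty ι]

lemma exists_le_capacity_of_forall_le (hs : #s ≤ m)
    (hl : ∀ i ∈ s, l i ≤ 2 * (m - #s) + 1) :
    ∃ g : Fin m → ι, ∀ i ∈ s, l i ≤ capacity g i := by
  induction m generalizing s with
  | zero => exact ⟨finZeroElim, fun i hi => by simp_all⟩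
  | succ m ih =>
    obtain rfl | ⟨i₀, hi₀⟩ := s.eq_empty_or_nonempty
    · exact ⟨fun _ => Classical.arbitrary ι, by simp⟩
    have hcard := card_erase_of_mem hi₀
    have hpos := card_pos.2 ⟨i₀, hi₀⟩
    obtain ⟨g, hg⟩ := ih (s := s.erase i₀) (by omega) fun i hi => by
      have := hl i (mem_of_mem_erase hi); omega
    exact ⟨_, le_capacity_snoc_of_erase hg (by have := hl i₀ hi₀; omega)⟩

theorem exists_le_capacity_of_sum_le (hl : ∀ i ∈ s, 1 ≤ l i) (hs : #s ≤ m)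
    (hsum : ∑ i ∈ s, l i + (#s - 1) ^ 2 ≤ m ^ 2) :
    ∃ g : Fin m → ι, ∀ i ∈ s, l i ≤ capacity g i := by
  induction m generalizing s l with
  | zero => exact ⟨finZeroElim, fun i hi => by simp_all⟩
  | succ m ih =>
    obtain rfl | hne := s.eq_empty_or_nonempty
    · exact ⟨fun _ => Classical.arbitrary ι, by simp⟩
    obtain ⟨i₀, hi₀, hmax⟩ := exists_max_image s l hne
    have hpos := card_pos.2 hne
    have hsplit := add_sum_erase s l hi₀
    have hsq : (m + 1) ^ 2 = m ^ 2 + 2 * m + 1 := by ring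
    by_cases hshort : l i₀ ≤ 2 * (m + 1 - #s) + 1
    · exact exists_le_capacity_of_forall_le hs fun i hi => (hmax i hi).trans hshort
    by_cases hcover : l i₀ ≤ 2 * m + 1
    · obtain ⟨g, hg⟩ := ih (s := s.erase i₀) (l := l)
        (fun i hi => hl i (mem_of_mem_erase hi)) (by rw [card_erase_of_mem hi₀]; omega) (by
          rw [card_erase_of_mem hi₀]
          have := sub_one_sq_add_two_mul_le (#s - 1)
          omega)
      exact ⟨_, le_capacity_snoc_of_erase hg hcover⟩
    · have hs' : #s ≤ m := by
        by_contra! hfull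
        have : #s - 1 = m := by omega
        rw [this] at hsum
        omega
      set l' := Function.update l i₀ (l i₀ - (2 * m + 1))
      have hsum' : ∑ i ∈ s, l' i + (#s - 1) ^ 2 ≤ m ^ 2 := by
        rw [sum_update_of_mem hi₀, sdiff_singleton_eq_erase]
        omega
      obtain ⟨g, hg⟩ := ih (s := s) (l := l')
        (fun i hi => by
          simp only [l']
          rcases eq_or_ne i i₀ with rfl | h
          · rw [Function.update_self]; omega
          · rw [Function.update_of_ne h]; exact hl i hi) hs' hsum'
      exact ⟨_, le_capacity_snoc_of_update hg⟩

end Greedy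

lemma card_filter_dist_le (L c r : ℕ) : #{x : Fin L | Nat.dist c x ≤ r} ≤ 2 * r + 1 := by
  calc #{x : Fin L | Nat.dist c x ≤ r}
      ≤ #(Icc (c - r) (c + r)) := card_le_card_of_injOn Fin.val (fun x hx => by
          have := (mem_filter.1 (mem_coe.1 hx)).2
          rw [Nat.dist] at this
          rw [mem_coe, mem_Icc]
          omega) Fin.val_injective.injOn
    _ ≤ 2 * r + 1 := by rw [Nat.card_Icc]; omega

section PathForest

variable {n : ℕ} {l : Fin n → ℕ}

lemma pathForest_walk_fst_eq {x y : Σ i, Fin (l i)} (p : (pathForest l).Walk x y) :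
    x.1 = y.1 := by
  induction p with
  | nil => rfl
  | cons h _ ih => exact h.1.trans ih

lemma dist_le_length_of_pathForest_walk {x y : Σ i, Fin (l i)}
    (p : (pathForest l).Walk x y) : Nat.dist x.2 y.2 ≤ p.length := by
  induction p with
  | nil => simp
  | cons h _ ih =>
    rw [SimpleGraph.Walk.length_cons]
    exact (Nat.dist.triangle_inequality _ _ _).trans (by rw [h.2]; omega)

lemma pathForest_edist_le_of_val_eq_add (i : Fin n) (d : ℕ) :
    ∀ a b : Fin (l i), (b : ℕ) = a + d →
      (pathForest l).edist ⟨i, a⟩ ⟨i, b⟩ ≤ d := by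
  induction d with
  | zero => intro a b h; simp [Fin.ext h]
  | succ d ih =>
    intro a b h
    let c : Fin (l i) := ⟨a + d, by omega⟩
    have hcb : (pathForest l).edist ⟨i, c⟩ ⟨i, b⟩ = 1 :=
      SimpleGraph.edist_eq_one_iff_adj.2 ⟨rfl, by simp [c, Nat.dist]; omega⟩
    calc _ ≤ _ := SimpleGraph.edist_triangle (v := ⟨i, c⟩)
      _ ≤ d + 1 := add_le_add (ih a c rfl) hcb.le
      _ = (d + 1 : ℕ) := by push_cast; rfl

lemma pathForest_edist_le_dist (i : Fin n) (a b : Fin (l i)) :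
    (pathForest l).edist ⟨i, a⟩ ⟨i, b⟩ ≤ Nat.dist a b := by
  wlog hab : (a : ℕ) ≤ b generalizing a b
  · rw [SimpleGraph.edist_comm, Nat.dist_comm]; exact this b a (by omega)
  rw [Nat.dist_eq_sub_of_le hab]
  exact pathForest_edist_le_of_val_eq_add i _ a b (by omega)

lemma eq_and_dist_le_of_pathForest_edist_le {x y : Σ i, Fin (l i)} {r : ℕ}
    (h : (pathForest l).edist x y ≤ r) : x.1 = y.1 ∧ Nat.dist x.2 y.2 ≤ r := by
  obtain ⟨p, hp⟩ :=
    SimpleGraph.exists_walk_of_edist_ne_top (h.trans_lt (ENat.natCast_lt_top r)).ne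
  exact ⟨pathForest_walk_fst_eq p,
    (dist_le_length_of_pathForest_walk p).trans (by rw [← hp] at h; exact_mod_cast h)⟩

end PathForest

section Burnable

variable {n m : ℕ} {l : Fin n → ℕ}

lemma exists_le_capacity_of_isBurnable (hb : IsBurnable (pathForest l) m) :
    ∃ g : Fin m → Fin n, ∀ i, l i ≤ capacity g i := by
  obtain ⟨f, hf⟩ := hb
  refine ⟨fun j => (f j).1, fun i => ?_⟩
  have hcover : (univ : Finset (Fin (l i))) ⊆
      ({j | (f j).1 = i} : Finset (Fin m)).biUnion fun j => {x | Nat.dist (f j).2 x ≤ j} := by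
    intro x _
    obtain ⟨j, hj⟩ := hf ⟨i, x⟩
    obtain ⟨hfst, hdist⟩ := eq_and_dist_le_of_pathForest_edist_le hj
    simp only [mem_biUnion, mem_filter, mem_univ, true_and]
    exact ⟨j, hfst, hdist⟩
  calc l i = #(univ : Finset (Fin (l i))) := by simp
    _ ≤ _ := card_le_card hcover
    _ ≤ _ := card_biUnion_le
    _ ≤ capacity (fun j => (f j).1) i := sum_le_sum fun j _ => card_filter_dist_le _ _ _

lemma isBurnable_of_le_capacity (hl : ∀ i, 1 ≤ l i) (g : Fin m → Fin n)
    (hg : ∀ i, l i ≤ capacity g i) : IsBurnable (pathForest l) m := by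
  -- The balls on each path are laid end to end by increasing radius; ball `j` covers the window
  -- `[offset j, offset j + 2j]`, and its centre is clipped to the last vertex of the path.
  let offset (j : Fin m) : ℕ := ∑ j' ∈ {j' | g j' = g j} with j' < j, (2 * (j' : ℕ) + 1)
  refine ⟨fun j => ⟨g j, min (offset j + j) (l (g j) - 1), by have := hl (g j); omega⟩, ?_⟩
  rintro ⟨i, x⟩
  obtain ⟨j, hj, hoff, hlt⟩ := exists_sum_filter_lt_le_lt
    (fun j : Fin m => 2 * (j : ℕ) + 1) {j | g j = i} (x.2.trans_le (hg i))
  obtain rfl := (mem_filter.1 hj).2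
  refine ⟨j, (pathForest_edist_le_dist _ _ x).trans ?_⟩
  have := x.2
  have hdist : Nat.dist (min (offset j + j) (l (g j) - 1)) x ≤ j := by
    simp only [Nat.dist, offset]; omega
  exact_mod_cast hdist

end Burnable

/-- For `m ≥ n ≥ 2`, every path forest with `n` paths of total order at most
`m² - (n-1)²` is `m`-burnable, and this bound is tight: some path forest with
`n` paths of total order `m² - (n-1)² + 1` is not `m`-burnable. -/
theorem stmt14 (m n : ℕ) (hn : 2 ≤ n) (hm : n ≤ m) :
    (∀ l : Fin n → ℕ, (∀ i, 1 ≤ l i) → ∑ i, l i ≤ m ^ 2 - (n - 1) ^ 2 →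
      IsBurnable (pathForest l) m) ∧
    ∃ l : Fin n → ℕ, (∀ i, 1 ≤ l i) ∧ ∑ i, l i = m ^ 2 - (n - 1) ^ 2 + 1 ∧
      ¬ IsBurnable (pathForest l) m := by
  obtain ⟨k, rfl⟩ : ∃ k, n = k + 1 := ⟨n - 1, by omega⟩
  rw [Nat.add_sub_cancel]
  have hsq : (k + 1) ^ 2 ≤ m ^ 2 := Nat.pow_le_pow_left hm 2
  have hexp : (k + 1) ^ 2 = k ^ 2 + 2 * k + 1 := by ring
  refine ⟨fun l hl hsum => ?_, ?_⟩
  · obtain ⟨g, hg⟩ := exists_le_capacity_of_sum_le (s := univ) (fun i _ => hl i)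
      (by simpa using hm)
      (by simp only [card_univ, Fintype.card_fin, Nat.add_sub_cancel]; omega)
    exact isBurnable_of_le_capacity hl g fun i => hg i (mem_univ i)
  · refine ⟨Fin.snoc (α := fun _ => ℕ) (fun _ => 2) (m ^ 2 - (k + 1) ^ 2 + 2),
      fun i => ?_, ?_, ?_⟩
    · cases i using Fin.lastCases <;> simp
    · simp only [Fin.sum_univ_castSucc, Fin.snoc_castSucc, sum_const, card_univ,
        Fintype.card_fin, smul_eq_mul, Fin.snoc_last]
      omega
    · intro hb
      obtain ⟨g, hg⟩ := exists_le_capacity_of_isBurnable hb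
      have := capacity_last_add_sq_le g fun i => by simpa using hg i.castSucc
      have := hg (Fin.last k)
      rw [Fin.snoc_last] at this
      omega
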